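/- In the U_t(sl-hat_{n+1|m}) vertex model, for all integers M,K ≥ 1 and all colours 0 ≤ i < j ≤ n+m, the rectangular partition function with boundary colours i and j freezes completely: ⟨(i^M) ⊗ (j^K)| Z_{M,K}(x;y) |(j^K) ⊗ (i^M)⟩ = t^{[i>0]·MK} · ∏_{a=1}^{M} ∏_{b=1}^{K} (y_b − x_a)/(y_b − t x_a), where [i>0] equals 1 if i > 0 and 0 if i = 0. -/

import Mathlib

open scoped BigOperators

noncomputable section

namespace ConicVertex

/-- The field `ℚ(q,t,x_0,x_1,…)` of rational functions in countably many
algebraically independent indeterminates. -/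
abbrev K : Type := FractionRing (MvPolynomial ℕ ℚ)

/-- The `i`-th indeterminate, viewed inside the fraction field. -/
def vr (i : ℕ) : K := algebraMap (MvPolynomial ℕ ℚ) K (MvPolynomial.X i)

/-- The Macdonald parameter `q`. -/
def qv : K := vr 0

/-- The Macdonald parameter `t`. -/
def tv : K := vr 1

/-- `ζ(u) = (1-qu)(1-t⁻¹u)/((1-u)(1-qt⁻¹u))`. -/
def zetaF (u : K) : K := ((1 - qv * u) * (1 - tv⁻¹ * u)) / ((1 - u) * (1 - qv * tv⁻¹ * u))

/-- Functions of the variables `x_0, x_1, …` (a function of `k` variables only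
reads the first `k` arguments). -/
abbrev SF : Type := (ℕ → K) → K

/-- The `a`-th smallest element of the finite set `S ⊆ ℕ`. -/
def sortedIdx (S : Finset ℕ) (a : ℕ) : ℕ := (S.sort (· ≤ ·)).getD a 0

/-- The shuffle product of a function `F` of `k` variables with a function `G`
of `l` variables:
`(F*G)(x_1…x_{k+l}) = Σ_{S, |S|=k} F(x_S) G(x_{Sᶜ}) Π_{i∈S,j∈Sᶜ} ζ(x_i/x_j)`. -/
def shuffleMul (k l : ℕ) (F G : SF) : SF := fun x =>
  ∑ S ∈ Finset.powersetCard k (Finset.range (k + l)),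
    F (fun a => x (sortedIdx S a)) *
      G (fun a => x (sortedIdx (Finset.range (k + l) \ S) a)) *
      ∏ i ∈ S, ∏ j ∈ Finset.range (k + l) \ S, zetaF (x i / x j)

/-- Iterated (left-to-right) shuffle product of a list of functions together
with their arities; returns the total arity and the product. -/
def shuffleListProd : List (ℕ × SF) → ℕ × SF
  | [] => (0, fun _ => 1)
  | (k, F) :: rest =>
      let p := shuffleListProd rest
      (k + p.1, shuffleMul k p.1 F p.2)

/-- The power-sum–like elements `S_k` of the shuffle algebra. -/
def Sel (k : ℕ) : SF := fun x =>
  ((1 - qv) ^ k * (1 - tv⁻¹) ^ k / ((tv - qv) ^ k * (1 - (tv ^ k)⁻¹))) *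
    ∑ σ : Equiv.Perm (Fin k),
      (fun y : ℕ → K =>
        ((∑ j ∈ Finset.range k, (qv / tv) ^ j * y j / y 0) /
            ∏ j ∈ Finset.range (k - 1), (1 - qv / tv * (y (j + 1) / y j))) *
          ∏ i ∈ Finset.range k, ∏ j ∈ Finset.range k,
            if i < j then zetaF (y i / y j) else 1)
        (fun a => if h : a < k then x (σ ⟨a, h⟩).val else x a)

/-- The factorised elements `E_k(p)` of the shuffle algebra. -/
def Eel (p : K) (k : ℕ) : SF := fun x =>
  ∏ i ∈ Finset.range k, ∏ j ∈ Finset.range k,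
    if i < j then
      ((x i - p * x j) * (x i - p⁻¹ * x j)) /
        ((x i - qv * tv⁻¹ * x j) * (x i - tv * qv⁻¹ * x j))
    else 1

/-- The Izergin-determinant elements `H_k(q_a)` (for the permutation `(a,b,c)`
of `(1,2,3)`). -/
def Hel (qa qb qc : K) (k : ℕ) : SF := fun x =>
  (qa * qv * tv⁻¹) ^ (k * (k - 1) / 2) *
    ((∏ i ∈ Finset.range k, ∏ j ∈ Finset.range k, ((x i - qb * x j) * (x j - qc * x i))) /
        ∏ i ∈ Finset.range k, ∏ j ∈ Finset.range k,
          (if i = j then 1 else (x i - x j) * (x i - qv * tv⁻¹ * x j))) *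
    Matrix.det (Matrix.of fun i j : Fin k =>
      1 / ((x i.val - qb * x j.val) * (x j.val - qc * x i.val)))

/-! ### The `U_t(sl-hat_{n+1|m})` vertex model

Colours are `0,…,n+m` (`d = n+m`); colours `1,…,n` are bosonic, colours
`n+1,…,n+m` fermionic, and colours are ordered `1 ≺ 2 ≺ ⋯ ≺ n+m ≺ 0`. -/

/-- Words of length `M` in the colours `0,…,d`, indexing the basis of `V^{⊗M}`. -/
abbrev Word (d M : ℕ) := Fin M → Fin (d + 1)

/-- The position of a colour in the order `1 ≺ 2 ≺ ⋯ ≺ n+m ≺ 0`. -/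
def ordC (d : ℕ) (a : Fin (d + 1)) : ℕ := if a.val = 0 then d + 1 else a.val

/-- Matrix elements of the `R`-check matrix `Ř(u)` on `V ⊗ V`:
`Rent n d u a b c e = ⟨a,b| Ř(u) |c,e⟩`. -/
def Rent (n d : ℕ) (u : K) (a b c e : Fin (d + 1)) : K :=
  if a = b ∧ b = c ∧ c = e then (if n < a.val then (u - tv) / (1 - tv * u) else 1)
  else if a = c ∧ b = e ∧ ordC d a < ordC d b then (1 - tv) / (1 - tv * u)
  else if a = c ∧ b = e ∧ ordC d b < ordC d a then (1 - tv) * u / (1 - tv * u)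
  else if a = e ∧ b = c ∧ ordC d a < ordC d b then tv * (1 - u) / (1 - tv * u)
  else if a = e ∧ b = c ∧ ordC d b < ordC d a then (1 - u) / (1 - tv * u)
  else 0

/-- `Ř_p(u)` acting on tensor factors `p, p+1` (0-based) of `V^{⊗M}`. -/
def Rop (n d M : ℕ) (p : ℕ) (u : K) : Matrix (Word d M) (Word d M) K :=
  Matrix.of fun α β =>
    if hp : p + 1 < M then
      if ∀ j : Fin M, j.val ≠ p → j.val ≠ p + 1 → α j = β j then
        Rent n d u (α ⟨p, by omega⟩) (α ⟨p + 1, hp⟩) (β ⟨p, by omega⟩) (β ⟨p + 1, hp⟩)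
      else 0
    else 0

/-- The column operator `C_b = Ř_{M+b-1}(x_M/y_b) ⋯ Ř_b(x_1/y_b)` (in 0-based
conventions) on `V^{⊗(M+Kc)}`. -/
def Cop (n d M Kc : ℕ) (x y : ℕ → K) (b : ℕ) :
    Matrix (Word d (M + Kc)) (Word d (M + Kc)) K :=
  (((List.range M).reverse).map fun a => Rop n d (M + Kc) (b + a) (x a / y b)).prod

/-- The rectangular lattice tensor `Z_{M,Kc}(x;y) = C_1 C_2 ⋯ C_{Kc}`. -/
def Zop (n d M Kc : ℕ) (x y : ℕ → K) :
    Matrix (Word d (M + Kc)) (Word d (M + Kc)) K :=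
  ((List.range Kc).map fun b => Cop n d M Kc x y b).prod

/-- `0^N ⊗ γ`. -/
def pad0 (d N : ℕ) (γ : Word d N) : Word d (N + N) := fun j =>
  if h : j.val < N then 0 else γ ⟨j.val - N, by have := j.isLt; omega⟩

/-- `⟨γ|W_N(x;y)|δ⟩ = ⟨0^N ⊗ γ| Z_N(x;y) |0^N ⊗ δ⟩`. -/
def Wop (n d N : ℕ) (x y : ℕ → K) : Matrix (Word d N) (Word d N) K :=
  Matrix.of fun γ δ => Zop n d N N x y (pad0 d N γ) (pad0 d N δ)

/-- `W_N(x) = W_N(x_1,…,x_N; q x_1,…,q x_N)`. -/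
def Wx (n d N : ℕ) (x : ℕ → K) : Matrix (Word d N) (Word d N) K :=
  Wop n d N x fun a => qv * x a

/-- The loop weights: `c_0 = z_0`, `c_j = z_j` for bosonic `j`, `c_{n+j} = -w_j`
for fermionic colours. -/
def coefZW (n : ℕ) (z w : ℕ → K) (a : ℕ) : K := if a ≤ n then z a else -w (a - n)

/-- The graded trace `T_N(x;z,w)`. -/
def Tfun (n m N : ℕ) (x z w : ℕ → K) : K :=
  ∑ α : Word (n + m) N, (∏ i : Fin N, coefZW n z w (α i).val) * Wx n (n + m) N x α α

/-- Generic spectral parameters: `x_{a+1} := vr (2+a)` (0-based). -/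
def xg (a : ℕ) : K := vr (2 + a)

/-- Generic column spectral parameters `y`. -/
def yg (N b : ℕ) : K := vr (2 + N + b)

/-- Generic bosonic weights `z_0,…,z_n`. -/
def zg (N j : ℕ) : K := vr (2 + N + j)

/-- Generic fermionic weights `w_1,…,w_m`. -/
def wg (N n j : ℕ) : K := vr (2 + N + n + 1 + j)

/-- Swap the values of `x` at `a` and `b`. -/
def swapF (x : ℕ → K) (a b : ℕ) : ℕ → K := fun c => if c = a then x b else if c = b then x a else x c

end ConicVertex

/-!
Give the position `q` of a word the weight `+q` if it carries the colour `i`, `-q` if it carries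
`j`, and `0` otherwise, and call the sum of these weights the potential of the word. The entry
`⟨γ|Ř_p(u)|δ⟩` vanishes unless `δ = γ` or `δ` is `γ` with the letters at `p, p+1` exchanged, so
every `Ř` raises the potential by at most `2`, and by exactly `2` only through a crossing
`i j → j i`. The two boundary words of the `M × K` rectangle differ in potential by `2MK`, the
most its `MK` vertices can achieve; hence every vertex is a crossing, the lattice freezes to a
single configuration, and the partition function is the product of the crossing weights
`t^[i>0] (1 - u) / (1 - t u)` at `u = x_a / y_b`.
-/

namespace Matrix

variable {ι R : Type*} [Semiring R] {f : ι → ℤ}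

def RaisesAtMost (f : ι → ℤ) (c : ℤ) (A : Matrix ι ι R) : Prop :=
  ∀ γ δ, A γ δ ≠ 0 → f δ ≤ f γ + c

lemma raisesAtMost_one [DecidableEq ι] : RaisesAtMost f 0 (1 : Matrix ι ι R) := by
  intro γ δ h
  obtain rfl : γ = δ := by_contra fun hne => h (one_apply_ne hne)
  simp

lemma RaisesAtMost.mul [Fintype ι] {a b : ℤ} {A B : Matrix ι ι R} (hA : RaisesAtMost f a A)
    (hB : RaisesAtMost f b B) : RaisesAtMost f (a + b) (A * B) := by
  intro γ δ h
  obtain ⟨ε, -, hε⟩ := Finset.exists_ne_zero_of_sum_ne_zero h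
  have := hA γ ε (left_ne_zero_of_mul hε)
  have := hB ε δ (right_ne_zero_of_mul hε)
  linarith

lemma raisesAtMost_list_prod [Fintype ι] [DecidableEq ι] {c : ℤ} (L : List (Matrix ι ι R))
    (h : ∀ A ∈ L, RaisesAtMost f c A) : RaisesAtMost f (L.length * c) L.prod := by
  induction L with
  | nil => simpa using raisesAtMost_one
  | cons A L ih =>
    rw [List.prod_cons, List.length_cons, Nat.cast_succ, add_one_mul, add_comm]
    exact (h A List.mem_cons_self).mul (ih fun B hB => h B (List.mem_cons_of_mem A hB))

lemma mul_apply_eq_of_raisesAtMost [Fintype ι] {a b : ℤ} {A B : Matrix ι ι R} {γ δ : ι} (ε₀ : ι)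
    (hA : ∀ ε ≠ ε₀, A γ ε ≠ 0 → f ε < f γ + a) (hB : RaisesAtMost f b B)
    (hδ : f δ = f γ + a + b) : (A * B) γ δ = A γ ε₀ * B ε₀ δ := by
  rw [mul_apply, Finset.sum_eq_single ε₀ _ (by simp)]
  intro ε _ hne
  by_contra h
  have := hA ε hne (left_ne_zero_of_mul h)
  have := hB ε δ (right_ne_zero_of_mul h)
  linarith

end Matrix

namespace ConicVertex

section Potential

variable {d N : ℕ} (ci cj : Fin (d + 1))

def colourWeight (c : Fin (d + 1)) : ℤ := if c = ci then 1 else if c = cj then -1 else 0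

def potential (γ : Word d N) : ℤ := ∑ q, colourWeight ci cj (γ q) * q

lemma colourWeight_sub_le (a b : Fin (d + 1)) :
    colourWeight ci cj a - colourWeight ci cj b ≤ 2 := by
  unfold colourWeight
  split_ifs <;> norm_num

lemma potential_comp_swap (γ : Word d N) {P P' : Fin N} (hP : P'.val = P.val + 1) :
    potential ci cj (γ ∘ Equiv.swap P P') =
      potential ci cj γ + (colourWeight ci cj (γ P) - colourWeight ci cj (γ P')) := by
  set σ := Equiv.swap P P'
  set w := fun q => colourWeight ci cj (γ q)
  have hne : P ≠ P' := fun h => by rw [h] at hP; omega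
  have hσ := Equiv.sum_comp σ fun q => w q * ((σ q : ℕ) : ℤ)
  simp only [σ, Equiv.swap_apply_self] at hσ
  have hmoved : ∑ q, w q * (((σ q : ℕ) : ℤ) - q) = w P - w P' := by
    rw [Fintype.sum_eq_add P P' hne fun q ⟨h1, h2⟩ => by
      simp [σ, Equiv.swap_apply_of_ne_of_ne h1 h2]]
    simp [σ, hP, sub_eq_add_neg]
  calc potential ci cj (γ ∘ σ) = ∑ q, (w q * q + w q * (((σ q : ℕ) : ℤ) - q)) := by
        rw [potential, Function.comp_def, hσ]
        exact Finset.sum_congr rfl fun q _ => by ring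
    _ = _ := by rw [Finset.sum_add_distrib, hmoved]; rfl

end Potential

def crossWeight (i : ℕ) (u : K) : K := (if 0 < i then tv else 1) * ((1 - u) / (1 - tv * u))

lemma rent_ne_zero {n d : ℕ} {u : K} {a b c e : Fin (d + 1)} (h : Rent n d u a b c e ≠ 0) :
    (a = c ∧ b = e) ∨ (a = e ∧ b = c) := by
  unfold Rent at h
  split_ifs at h <;> first | exact absurd rfl h | grind

lemma rent_cross {n d : ℕ} (u : K) {a b : Fin (d + 1)} (hab : a < b) :
    Rent n d u a b b a = crossWeight a u := by
  have hb := b.isLt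
  rw [Fin.lt_def] at hab
  rcases Nat.eq_zero_or_pos a.val with ha | ha
  · simp [Rent, ordC, crossWeight, ha, show ¬d + 1 < b by omega, show ¬d < b by omega,
      show (b : ℕ) ≠ 0 by omega, Fin.ext_iff]
  · simp [Rent, ordC, crossWeight, hab.ne, ha.ne', hab, ha, show (b : ℕ) ≠ 0 by omega,
      mul_div_assoc, Fin.ext_iff]

section Lattice

variable {n d N : ℕ} {ci cj : Fin (d + 1)}

lemma rop_ne_zero {p : ℕ} {u : K} {γ δ : Word d N} (h : Rop n d N p u γ δ ≠ 0) :
    ∃ hp : p + 1 < N, δ = γ ∨ δ = γ ∘ Equiv.swap ⟨p, by omega⟩ ⟨p + 1, hp⟩ := by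
  simp only [Rop, Matrix.of_apply] at h
  split_ifs at h with hp hfix
  · refine ⟨hp, ?_⟩
    have hfix' : ∀ q : Fin N, q ≠ ⟨p, by omega⟩ → q ≠ ⟨p + 1, hp⟩ → δ q = γ q :=
      fun q h1 h2 => (hfix q (fun e => h1 (Fin.ext e)) (fun e => h2 (Fin.ext e))).symm
    rcases rent_ne_zero h with ⟨h1, h2⟩ | ⟨h1, h2⟩
    · left
      funext q
      by_cases hq1 : q = ⟨p, by omega⟩
      · rw [hq1, h1]
      by_cases hq2 : q = ⟨p + 1, hp⟩
      · rw [hq2, h2]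
      exact hfix' q hq1 hq2
    · right
      funext q
      by_cases hq1 : q = ⟨p, by omega⟩
      · rw [hq1, Function.comp_apply, Equiv.swap_apply_left, h2]
      by_cases hq2 : q = ⟨p + 1, hp⟩
      · rw [hq2, Function.comp_apply, Equiv.swap_apply_right, h1]
      rw [hfix' q hq1 hq2, Function.comp_apply, Equiv.swap_apply_of_ne_of_ne hq1 hq2]
  all_goals exact absurd rfl h

lemma rop_apply_comp_swap {p : ℕ} (hp : p + 1 < N) (u : K) {γ : Word d N}
    (hγ : γ ⟨p, by omega⟩ < γ ⟨p + 1, hp⟩) :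
    Rop n d N p u γ (γ ∘ Equiv.swap ⟨p, by omega⟩ ⟨p + 1, hp⟩) =
      crossWeight (γ ⟨p, by omega⟩) u := by
  have hfix : ∀ q : Fin N, q.val ≠ p → q.val ≠ p + 1 →
      γ q = γ (Equiv.swap ⟨p, by omega⟩ ⟨p + 1, hp⟩ q) := fun q h1 h2 => by
    rw [Equiv.swap_apply_of_ne_of_ne (fun e => h1 (congrArg Fin.val e))
      (fun e => h2 (congrArg Fin.val e))]
  simp only [Rop, Matrix.of_apply, dif_pos hp, Function.comp_apply, if_pos hfix,
    Equiv.swap_apply_left, Equiv.swap_apply_right]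
  exact rent_cross u hγ

lemma rop_raisesAtMost (p : ℕ) (u : K) :
    Matrix.RaisesAtMost (potential ci cj) 2 (Rop n d N p u) := by
  intro γ δ h
  obtain ⟨hp, rfl | rfl⟩ := rop_ne_zero h
  · linarith
  · rw [potential_comp_swap ci cj γ rfl]
    linarith [colourWeight_sub_le ci cj (γ ⟨p, by omega⟩) (γ ⟨p + 1, hp⟩)]

lemma rop_mul_apply_of_potential_eq {p : ℕ} (hp : p + 1 < N) (u : K) (hlt : ci < cj)
    {c : ℤ} {B : Matrix (Word d N) (Word d N) K} (hB : Matrix.RaisesAtMost (potential ci cj) c B)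
    {γ δ : Word d N} (h1 : γ ⟨p, by omega⟩ = ci) (h2 : γ ⟨p + 1, hp⟩ = cj)
    (hδ : potential ci cj δ = potential ci cj γ + 2 + c) :
    (Rop n d N p u * B) γ δ =
      crossWeight ci u * B (γ ∘ Equiv.swap ⟨p, by omega⟩ ⟨p + 1, hp⟩) δ := by
  rw [Matrix.mul_apply_eq_of_raisesAtMost _ _ hB hδ, rop_apply_comp_swap hp u (by rwa [h1, h2]), h1]
  intro ε hε hε0
  obtain ⟨_, rfl | hswap⟩ := rop_ne_zero hε0
  · linarith
  · exact absurd hswap hε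

variable {M b k : ℕ}

def blockWord (d N M b k : ℕ) (ci cj : Fin (d + 1)) : Word d N := fun q =>
  if b ≤ q.val ∧ q.val ≤ b + M ∧ q.val ≠ b + k then ci else cj

lemma blockWord_zero : blockWord d N M b 0 ci cj = blockWord d N M (b + 1) M ci cj := by
  funext q
  exact if_congr (by omega) rfl rfl

lemma blockWord_comp_swap (hk : k < M) (hN : b + k + 1 < N) :
    blockWord d N M b (k + 1) ci cj ∘ Equiv.swap ⟨b + k, by omega⟩ ⟨b + k + 1, hN⟩ =
      blockWord d N M b k ci cj := by
  funext q
  simp only [Function.comp_apply, Equiv.swap_apply_def, blockWord]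
  split_ifs <;> simp_all [Fin.ext_iff] <;> omega

lemma potential_blockWord_succ (hne : ci ≠ cj) (hk : k < M) (hN : b + k + 1 < N) :
    potential ci cj (blockWord d N M b k ci cj) =
      potential ci cj (blockWord d N M b (k + 1) ci cj) + 2 := by
  rw [← blockWord_comp_swap hk hN, potential_comp_swap ci cj _ rfl]
  simp [blockWord, colourWeight, hne.symm, hk.le, show b + k + 1 = b + (k + 1) by ring]

lemma potential_blockWord_zero (hne : ci ≠ cj) (hk : k ≤ M) (hN : b + k < N) :
    potential ci cj (blockWord d N M b 0 ci cj) =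
      potential ci cj (blockWord d N M b k ci cj) + 2 * k := by
  induction k with
  | zero => simp
  | succ k ih =>
    rw [ih (by omega) (by omega), potential_blockWord_succ hne (by omega) hN]
    push_cast
    ring

lemma potential_blockWord_add (hne : ci ≠ cj) {r : ℕ} (hN : b + r + M ≤ N) :
    potential ci cj (blockWord d N M (b + r) M ci cj) =
      potential ci cj (blockWord d N M b M ci cj) + 2 * M * r := by
  induction r with
  | zero => simp
  | succ r ih =>
    rw [← add_assoc, ← blockWord_zero, potential_blockWord_zero hne le_rfl (by omega),
      ih (by omega)]
    push_cast
    ring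

end Lattice

section Columns

variable {n d N : ℕ} {ci cj : Fin (d + 1)} {x y : ℕ → K}

def columnOp (n d N : ℕ) (x y : ℕ → K) (b k : ℕ) : Matrix (Word d N) (Word d N) K :=
  (((List.range k).reverse).map fun a => Rop n d N (b + a) (x a / y b)).prod

lemma columnOp_succ (b k : ℕ) : columnOp n d N x y b (k + 1) =
    Rop n d N (b + k) (x k / y b) * columnOp n d N x y b k := by
  simp [columnOp, List.range_succ]

lemma columnOp_raisesAtMost (b k : ℕ) :
    Matrix.RaisesAtMost (potential ci cj) (2 * k) (columnOp n d N x y b k) := by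
  have := Matrix.raisesAtMost_list_prod (f := potential ci cj) (c := 2)
    (((List.range k).reverse).map fun a => Rop n d N (b + a) (x a / y b))
    (by simp [rop_raisesAtMost])
  simpa [columnOp, mul_comm] using this

lemma columnOp_mul_apply {M b k : ℕ} (hlt : ci < cj) (hk : k ≤ M) (hN : b + k < N) {c : ℤ}
    {B : Matrix (Word d N) (Word d N) K} (hB : Matrix.RaisesAtMost (potential ci cj) c B)
    {δ : Word d N}
    (hδ : potential ci cj δ = potential ci cj (blockWord d N M b k ci cj) + 2 * k + c) :
    (columnOp n d N x y b k * B) (blockWord d N M b k ci cj) δ =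
      (∏ a ∈ Finset.range k, crossWeight ci (x a / y b)) *
        B (blockWord d N M b 0 ci cj) δ := by
  induction k with
  | zero => simp [columnOp]
  | succ k ih =>
    have hNk : b + k + 1 < N := by omega
    have hpot := potential_blockWord_succ hlt.ne (M := M) (by omega) hNk
    push_cast at hδ
    rw [columnOp_succ, Matrix.mul_assoc,
      rop_mul_apply_of_potential_eq hNk _ hlt ((columnOp_raisesAtMost b k).mul hB)
        (if_pos (by dsimp only; omega)) (if_neg (by dsimp only; omega))
        (by linarith),
      blockWord_comp_swap (by omega) hNk, ih (by omega) (by omega) (by linarith),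
      Finset.prod_range_succ]
    ring

lemma cop_prod_apply_blockWord {M Kc : ℕ} (hlt : ci < cj) (r b : ℕ) (hr : b + r ≤ Kc) :
    (((List.range' b r).map fun b' => Cop n d M Kc x y b').prod)
        (blockWord d (M + Kc) M b M ci cj) (blockWord d (M + Kc) M (b + r) M ci cj) =
      ∏ s ∈ Finset.range r, ∏ a ∈ Finset.range M, crossWeight ci (x a / y (b + s)) := by
  induction r generalizing b with
  | zero => simp
  | succ r ih =>
    have hrest := Matrix.raisesAtMost_list_prod (f := potential ci cj) (c := 2 * M)
      ((List.range' (b + 1) r).map fun b' => Cop n d M Kc x y b')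
      (by simp only [List.mem_map]; rintro _ ⟨b', -, rfl⟩; exact columnOp_raisesAtMost b' M)
    rw [List.length_map, List.length_range'] at hrest
    have hpot := potential_blockWord_add hlt.ne (N := M + Kc) (M := M) (b := b) (r := r + 1)
      (by omega)
    rw [List.range'_succ, List.map_cons, List.prod_cons,
      show Cop n d M Kc x y b = columnOp n d (M + Kc) x y b M from rfl,
      columnOp_mul_apply hlt le_rfl (by omega) hrest (by rw [hpot]; push_cast; ring),
      blockWord_zero, show b + (r + 1) = b + 1 + r by ring, ih (b + 1) (by omega),
      Finset.prod_range_succ']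
    simp [add_assoc, add_comm 1, mul_comm]

end Columns

lemma vr_ne_zero (k : ℕ) : vr k ≠ 0 :=
  (map_ne_zero_iff _ (IsFractionRing.injective (MvPolynomial ℕ ℚ) K)).mpr
    (MvPolynomial.X_ne_zero k)

lemma crossWeight_div (i : ℕ) (x : K) {y : K} (hy : y ≠ 0) :
    crossWeight i (x / y) = (if 0 < i then tv else 1) * ((y - x) / (y - tv * x)) := by
  rw [crossWeight, ← mul_div_mul_left (1 - x / y) _ hy, mul_sub, mul_sub, mul_one,
    mul_div_cancel₀ _ hy, mul_left_comm, mul_div_cancel₀ _ hy]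

/-- Complete freezing of a rectangular block: for colours
`0 ≤ i < j ≤ n+m`,
`⟨(i^M)⊗(j^K)|Z_{M,K}(x;y)|(j^K)⊗(i^M)⟩ = t^{[i>0]MK} Π_{a,b}(y_b-x_a)/(y_b-tx_a)`. -/
theorem statement14 (n m : ℕ) (M Kc : ℕ)
    (i j : ℕ) (hij : i < j) (hj : j ≤ n + m) :
    Zop n (n + m) M Kc xg (fun b => vr (2 + M + b))
        (fun p => if p.val < M then (⟨i, by omega⟩ : Fin (n + m + 1)) else ⟨j, by omega⟩)
        (fun p => if p.val < Kc then (⟨j, by omega⟩ : Fin (n + m + 1)) else ⟨i, by omega⟩) =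
      tv ^ (if 0 < i then M * Kc else 0) *
        ∏ a ∈ Finset.range M, ∏ b ∈ Finset.range Kc,
          (vr (2 + M + b) - xg a) / (vr (2 + M + b) - tv * xg a) := by
  set ci : Fin (n + m + 1) := ⟨i, by omega⟩
  set cj : Fin (n + m + 1) := ⟨j, by omega⟩
  have hbra : (fun p : Fin (M + Kc) => if p.val < M then ci else cj) =
      blockWord (n + m) (M + Kc) M 0 M ci cj :=
    funext fun p => if_congr (by omega) rfl rfl
  have hket : (fun p : Fin (M + Kc) => if p.val < Kc then cj else ci) =
      blockWord (n + m) (M + Kc) M Kc M ci cj :=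
    funext fun p => by unfold blockWord; split_ifs <;> first | rfl | omega
  have hcols := cop_prod_apply_blockWord (n := n) (M := M) (Kc := Kc) (x := xg)
    (y := fun b => vr (2 + M + b)) (Fin.mk_lt_mk.mpr hij : ci < cj) Kc 0 (by omega)
  simp only [zero_add, crossWeight_div _ _ (vr_ne_zero _)] at hcols
  rw [hbra, hket, Zop, List.range_eq_range', hcols, Finset.prod_comm]
  simp only [Finset.prod_mul_distrib, Finset.prod_const, Finset.card_range, ← pow_mul]
  split_ifs <;> simp [mul_comm]

end ConicVertex
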